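/- arXiv:1503.02654 — 2 statements merged into one kernel-verified Lean document; each statement's English description precedes it below -/
import Mathlib

section
/- Any placement P of ρ replicas on leaves of a rooted tree that lexicominimizes the failure aggregate f⃗(P) must be balanced: for every internal node u with children 1,...,k, if child i is unfilled (ℓ_i - r_i > 0) then r_i ≥ r_j − 1 for all children j, where ℓ_i is the number of leaves under child i and r_i = |P ∩ leaves(child i)|. -/
open scoped Classical

/-- A rooted tree on a finite vertex set `V`, given by a parent function under which
every vertex reaches the root. -/
structure FailTree (V : Type*) [Fintype V] where
  root : V
  parent : V → V
  parent_root : parent root = root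
  reaches_root : ∀ v, ∃ n : ℕ, parent^[n] v = root

namespace FailTree

variable {V : Type*} [Fintype V]

/-- `T.Desc u v` : `u` is a descendant of `v` (every node is a descendant of itself). -/
def Desc (T : FailTree V) (u v : V) : Prop := ∃ n : ℕ, T.parent^[n] u = v

/-- A leaf is a node with no children. -/
def IsLeaf (T : FailTree V) (v : V) : Prop := ∀ u, T.parent u = v → u = v

noncomputable def leaves (T : FailTree V) : Finset V :=
  Finset.univ.filter fun v => T.IsLeaf v

/-- The failure number `f(v, P)` of node `v` under placement `P`:
the number of members of `P` that are descendants of `v`. -/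
noncomputable def fnum (T : FailTree V) (v : V) (P : Finset V) : ℕ :=
  (P.filter fun p => T.Desc p v).card

/-- The failure aggregate restricted to a set `S` of nodes: entry `i` counts the
nodes of `S` having failure number `i`. -/
noncomputable def faggOn (T : FailTree V) (S P : Finset V) : ℕ → ℕ :=
  fun i => (S.filter fun v => T.fnum v P = i).card

/-- The failure aggregate `f⃗(P)`: entry `i` counts the nodes with failure number `i`. -/
noncomputable def fagg (T : FailTree V) (P : Finset V) : ℕ → ℕ :=
  T.faggOn Finset.univ P

/-- The node set of the path from the root to `x`, i.e. all ancestors of `x`. -/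
noncomputable def pathTo (T : FailTree V) (x : V) : Finset V :=
  Finset.univ.filter fun v => T.Desc x v

/-- The number of leaves in the subtree rooted at `v`. -/
noncomputable def leafCount (T : FailTree V) (v : V) : ℕ :=
  (T.leaves.filter fun l => T.Desc l v).card

end FailTree

/-- Strict lexicographic comparison of failure aggregates; entries with higher index
(higher failure number) are more significant. -/
def AggLt (p q : ℕ → ℕ) : Prop := ∃ m, p m < q m ∧ ∀ i, m < i → p i = q i

/-- Lexicographic comparison (non-strict) of failure aggregates. -/
def AggLe (p q : ℕ → ℕ) : Prop := p = q ∨ AggLt p q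

theorem AggLt.not_aggLe {p q : ℕ → ℕ} (h : AggLt p q) : ¬ AggLe q p := by
  obtain ⟨m, hm, hm_eq⟩ := h
  rintro (rfl | ⟨m', hm', hm'_eq⟩)
  · exact hm.false
  · rcases lt_trichotomy m m' with hlt | rfl | hlt
    · exact hm'.ne (hm_eq m' hlt).symm
    · exact hm.asymm hm'
    · exact hm.ne (hm'_eq m hlt).symm

/-- The value counts of `f` and `g` agree above `s` and drop at `s`. -/
theorem aggLt_card_filter_of_changes_le {α : Type*} (S : Finset α) (f g : α → ℕ) (s : ℕ)
    (hchange : ∀ a ∈ S, f a ≠ g a → f a < s ∧ g a ≤ s) {a₀ : α} (ha₀ : a₀ ∈ S)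
    (hg : g a₀ = s) (hf : f a₀ ≠ s) :
    AggLt (fun i => (S.filter fun a => f a = i).card)
      (fun i => (S.filter fun a => g a = i).card) := by
  refine ⟨s, Finset.card_lt_card ?_, fun i hi => congrArg Finset.card ?_⟩
  · refine Finset.ssubset_iff_of_subset (fun a ha => ?_) |>.mpr ⟨a₀, ?_, ?_⟩
    · simp only [Finset.mem_filter] at ha ⊢
      refine ⟨ha.1, ?_⟩
      by_contra hne
      have := hchange a ha.1 (by omega)
      omega
    · simp [ha₀, hg]
    · simp [hf]
  · ext a
    simp only [Finset.mem_filter, and_congr_right_iff]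
    intro ha
    by_cases hfg : f a = g a
    · rw [hfg]
    · have := hchange a ha hfg
      constructor <;> intro h <;> omega

namespace FailTree

variable {V : Type*} [Fintype V] (T : FailTree V)

theorem desc_trans {x y z : V} (hxy : T.Desc x y) (hyz : T.Desc y z) : T.Desc x z := by
  obtain ⟨a, rfl⟩ := hxy
  obtain ⟨b, rfl⟩ := hyz
  exact ⟨b + a, Function.iterate_add_apply _ _ _ _⟩

theorem desc_parent (x : V) : T.Desc x (T.parent x) := ⟨1, rfl⟩

/-- Every orbit ends at the fixed point `root`. -/
theorem eq_root_of_iterate_eq {c : V} {p : ℕ} (hp : 0 < p) (h : T.parent^[p] c = c) :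
    c = T.root := by
  obtain ⟨n, hn⟩ := T.reaches_root c
  calc c = T.parent^[p * n] c := ((Function.IsPeriodicPt.mul_const h n).eq).symm
    _ = T.parent^[p * n - n] (T.parent^[n] c) := by
      rw [← Function.iterate_add_apply, Nat.sub_add_cancel (Nat.le_mul_of_pos_left n hp)]
    _ = T.root := by rw [hn, Function.iterate_fixed T.parent_root]

theorem not_desc_of_parent_eq {c u : V} (hc : T.parent c = u) (hcu : c ≠ u) : ¬ T.Desc u c := by
  rintro ⟨k, hk⟩
  have hroot := T.eq_root_of_iterate_eq k.succ_pos (by rw [Function.iterate_succ_apply, hc, hk])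
  exact hcu (by rw [← hc, hroot, T.parent_root])

theorem eq_or_parent_desc_of_desc {a b : V} (h : T.Desc a b) : a = b ∨ T.Desc (T.parent a) b := by
  obtain ⟨_ | n, rfl⟩ := h
  · exact .inl rfl
  · exact .inr ⟨n, (Function.iterate_succ_apply _ _ _).symm⟩

/-- The ancestors of `x` form a chain. -/
theorem desc_or_parent_desc {x c w : V} (hxc : T.Desc x c) (hxw : T.Desc x w) :
    T.Desc w c ∨ T.Desc (T.parent c) w := by
  obtain ⟨m, rfl⟩ := hxc
  obtain ⟨n, rfl⟩ := hxw
  rcases le_or_gt n m with h | h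
  · exact .inl ⟨m - n, by rw [← Function.iterate_add_apply, Nat.sub_add_cancel h]⟩
  · refine .inr ⟨n - m - 1, ?_⟩
    rw [← Function.iterate_succ_apply' T.parent, ← Function.iterate_add_apply]
    congr 1
    omega

theorem not_desc_of_desc_sibling {x c c' u : V} (hc : T.parent c = u) (hc' : T.parent c' = u)
    (hcu : c ≠ u) (hc'u : c' ≠ u) (hne : c ≠ c') (hx : T.Desc x c) : ¬ T.Desc x c' := by
  intro hx'
  rcases T.desc_or_parent_desc hx' hx with h | h
  · rcases T.eq_or_parent_desc_of_desc h with h | h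
    · exact hne h
    · exact T.not_desc_of_parent_eq hc' hc'u (hc ▸ h)
  · exact T.not_desc_of_parent_eq hc hcu (hc' ▸ h)

theorem fnum_mono {v w : V} (h : T.Desc v w) (P : Finset V) : T.fnum v P ≤ T.fnum w P :=
  Finset.card_le_card <| Finset.monotone_filter_right _ fun _ _ hp => T.desc_trans hp h

theorem fnum_le_of_desc {z c v : V} (hzc : T.Desc z c) (hzv : T.Desc z v)
    (hv : ¬ T.Desc (T.parent c) v) (P : Finset V) : T.fnum v P ≤ T.fnum c P :=
  (T.desc_or_parent_desc hzc hzv).elim (T.fnum_mono · P) (absurd · hv)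

theorem exists_leaf_notMem_of_fnum_lt_leafCount {c : V} {P : Finset V}
    (h : T.fnum c P < T.leafCount c) : ∃ x ∈ T.leaves, T.Desc x c ∧ x ∉ P := by
  by_contra! hfull
  refine h.not_ge (Finset.card_le_card fun l hl => ?_)
  rw [Finset.mem_filter] at hl ⊢
  exact ⟨hfull l hl.1 hl.2, hl.2⟩

/-- Stated additively to avoid truncated subtraction. -/
theorem fnum_insert_erase_add {x y : V} {P : Finset V} (hx : x ∉ P) (hy : y ∈ P) (v : V) :
    T.fnum v (insert x (P.erase y)) + (if T.Desc y v then 1 else 0) =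
      T.fnum v P + (if T.Desc x v then 1 else 0) := by
  unfold fnum
  rw [Finset.filter_insert, Finset.filter_erase]
  have hxF : x ∉ (P.filter fun p => T.Desc p v).erase y := by simp [hx]
  split_ifs with hxv hyv hyv
  · rw [Finset.card_insert_of_notMem hxF, Finset.card_erase_add_one (by simp [hy, hyv])]
  · rw [Finset.card_insert_of_notMem hxF, Finset.erase_eq_of_notMem (by simp [hyv])]
  · rw [Finset.card_erase_add_one (by simp [hy, hyv]), Nat.add_zero]
  · rw [Finset.erase_eq_of_notMem (by simp [hyv])]

/-- The exchange argument: only ancestors of exactly one of `x`, `y` change; those gaining a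
replica lie below `ci` and so stay below `r_cj`, those losing one lie below `cj`, and `cj`
itself drops from `r_cj`. -/
theorem fagg_insert_erase_aggLt {u ci cj x y : V} {P : Finset V} (hci : T.parent ci = u)
    (hcj : T.parent cj = u) (hciu : ci ≠ u) (hcju : cj ≠ u) (hxci : T.Desc x ci) (hxP : x ∉ P)
    (hycj : T.Desc y cj) (hyP : y ∈ P) (hgap : T.fnum ci P + 1 < T.fnum cj P) :
    AggLt (T.fagg (insert x (P.erase y))) (T.fagg P) := by
  have hxu : T.Desc x u := hci ▸ T.desc_trans hxci (T.desc_parent ci)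
  have hyu : T.Desc y u := hcj ▸ T.desc_trans hycj (T.desc_parent cj)
  have hxcj : ¬ T.Desc x cj :=
    T.not_desc_of_desc_sibling hci hcj hciu hcju (by rintro rfl; omega) hxci
  refine aggLt_card_filter_of_changes_le _ _ _ (T.fnum cj P) (fun v _ hne => ?_)
    (Finset.mem_univ cj) rfl ?_
  · have hswap := T.fnum_insert_erase_add hxP hyP v
    by_cases hxv : T.Desc x v <;> by_cases hyv : T.Desc y v <;>
      simp only [hxv, hyv, if_true, if_false] at hswap
    · omega
    · have := T.fnum_le_of_desc hxci hxv (hci ▸ fun h => hyv (T.desc_trans hyu h)) P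
      omega
    · have := T.fnum_le_of_desc hycj hyv (hcj ▸ fun h => hxv (T.desc_trans hxu h)) P
      omega
    · omega
  · have hswap := T.fnum_insert_erase_add hxP hyP cj
    simp only [hxcj, hycj, if_true, if_false] at hswap
    omega

end FailTree

/-- Theorem 2: any placement of `ρ` replicas on the leaves that lexicominimizes the
failure aggregate is balanced: at every node `u`, if child `ci` is unfilled then
`r_{cj} ≤ r_{ci} + 1` for every child `cj` of `u`. -/
theorem optimal_placement_balanced {V : Type*} [Fintype V] (T : FailTree V)
    (ρ : ℕ) (P : Finset V) (hPleaves : P ⊆ T.leaves) (hcard : P.card = ρ)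
    (hopt : ∀ Q : Finset V, Q ⊆ T.leaves → Q.card = ρ → AggLe (T.fagg P) (T.fagg Q)) :
    ∀ u ci cj : V, T.parent ci = u → ci ≠ u → T.parent cj = u → cj ≠ u →
      T.fnum ci P < T.leafCount ci → T.fnum cj P ≤ T.fnum ci P + 1 := by
  intro u ci cj hci hciu hcj hcju hunfilled
  by_contra! hgap
  obtain ⟨x, hxleaf, hxci, hxP⟩ := T.exists_leaf_notMem_of_fnum_lt_leafCount hunfilled
  obtain ⟨y, hy⟩ : (P.filter fun p => T.Desc p cj).Nonempty :=
    Finset.card_pos.mp (by unfold FailTree.fnum at hgap; omega)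
  obtain ⟨hyP, hycj⟩ := Finset.mem_filter.mp hy
  have hQleaves : insert x (P.erase y) ⊆ T.leaves :=
    Finset.insert_subset hxleaf ((P.erase_subset y).trans hPleaves)
  have hQcard : (insert x (P.erase y)).card = ρ := by
    rw [Finset.card_insert_of_notMem (by simp [hxP]), Finset.card_erase_add_one hyP, hcard]
  exact (T.fagg_insert_erase_aggLt hci hcj hciu hcju hxci hxP hycj hyP hgap).not_aggLe
    (hopt _ hQleaves hQcard)
end

section
/- Path comparison implies placement comparison: let T be a rooted tree with root r, P a placement, and a, b two unoccupied leaves (a,b ∉ P). If f⃗(r⇝a, P) <_L f⃗(r⇝b, P), where r⇝x denotes the set of nodes on the path from r to x, then f⃗(P ∪ {a}) <_L f⃗(P ∪ {b}). -/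
open scoped Classical

/-!
Adding an unoccupied leaf `a` to `P` raises the failure number by one exactly on the nodes of the
path `r ⇝ a` and leaves it unchanged elsewhere. Hence entry `i + 1` of `f⃗(P ∪ {a})` equals entry
`i + 1` of `f⃗(P)`, minus the path nodes of failure number `i + 1`, plus the path nodes of failure
number `i`. Comparing `a` with `b`, the common term `f⃗(P)` cancels, so the top index `m` where the
path aggregates differ becomes the top index `m + 1` where the placement aggregates differ, with
the same sign.
-/

namespace FailTree

variable {V : Type*} [Fintype V] (T : FailTree V)

lemma fnum_insert {P : Finset V} {a : V} (haP : a ∉ P) (v : V) :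
    T.fnum v (insert a P) = T.fnum v P + if T.Desc a v then 1 else 0 := by
  unfold fnum
  rw [Finset.filter_insert]
  split_ifs
  · rw [Finset.card_insert_of_notMem fun h => haP (Finset.mem_filter.mp h).1]
  · rfl

lemma faggOn_add_faggOn_compl (S P : Finset V) (i : ℕ) :
    T.faggOn S P i + T.faggOn Sᶜ P i = T.fagg P i := by
  unfold fagg faggOn
  rw [← Finset.card_union_of_disjoint (Finset.disjoint_filter_filter disjoint_compl_right),
    ← Finset.filter_union, Finset.union_compl]

lemma faggOn_pathTo_insert {P : Finset V} {a : V} (haP : a ∉ P) (i : ℕ) :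
    T.faggOn (T.pathTo a) (insert a P) (i + 1) = T.faggOn (T.pathTo a) P i := by
  unfold faggOn
  congr 1
  refine Finset.filter_congr fun v hv => ?_
  rw [T.fnum_insert haP, if_pos (Finset.mem_filter.mp hv).2, Nat.add_right_cancel_iff]

lemma faggOn_compl_pathTo_insert {P : Finset V} {a : V} (haP : a ∉ P) (i : ℕ) :
    T.faggOn (T.pathTo a)ᶜ (insert a P) i = T.faggOn (T.pathTo a)ᶜ P i := by
  unfold faggOn
  congr 1
  refine Finset.filter_congr fun v hv => ?_
  have hDesc : ¬ T.Desc a v := by simpa [pathTo] using hv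
  rw [T.fnum_insert haP, if_neg hDesc, add_zero]

lemma fagg_insert_succ_add {P : Finset V} {a : V} (haP : a ∉ P) (i : ℕ) :
    T.fagg (insert a P) (i + 1) + T.faggOn (T.pathTo a) P (i + 1)
      = T.fagg P (i + 1) + T.faggOn (T.pathTo a) P i := by
  rw [← T.faggOn_add_faggOn_compl (T.pathTo a) (insert a P),
    ← T.faggOn_add_faggOn_compl (T.pathTo a) P, T.faggOn_pathTo_insert haP,
    T.faggOn_compl_pathTo_insert haP]
  ring

end FailTree

lemma AggLt.of_succ_add_eq {p q p' q' c : ℕ → ℕ}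
    (hp : ∀ i, p' (i + 1) + p (i + 1) = c i + p i)
    (hq : ∀ i, q' (i + 1) + q (i + 1) = c i + q i) (h : AggLt p q) : AggLt p' q' := by
  obtain ⟨m, hm, hgt⟩ := h
  refine ⟨m + 1, ?_, fun i hi => ?_⟩
  · have := hgt (m + 1) (by omega)
    have := hp m
    have := hq m
    omega
  · obtain ⟨k, rfl⟩ : ∃ k, i = k + 1 := ⟨i - 1, by omega⟩
    have := hgt k (by omega)
    have := hgt (k + 1) (by omega)
    have := hp k
    have := hq k
    omega

theorem path_lt_imp_placement_lt_general {V : Type*} [Fintype V] (T : FailTree V)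
    (P : Finset V)
    (a b : V) (haP : a ∉ P) (hbP : b ∉ P)
    (h : AggLt (T.faggOn (T.pathTo a) P) (T.faggOn (T.pathTo b) P)) :
    AggLt (T.fagg (insert a P)) (T.fagg (insert b P)) :=
  h.of_succ_add_eq (T.fagg_insert_succ_add haP) (T.fagg_insert_succ_add hbP)

/-- Lemma 2: if the failure aggregate along the root-to-`a` path is lexicographically
strictly smaller than along the root-to-`b` path, then adding `a` yields a
lexicographically strictly smaller failure aggregate than adding `b`. -/
theorem path_lt_imp_placement_lt {V : Type*} [Fintype V] (T : FailTree V)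
    (P : Finset V) (hP : P ⊆ T.leaves)
    (a b : V) (ha : a ∈ T.leaves) (hb : b ∈ T.leaves) (haP : a ∉ P) (hbP : b ∉ P)
    (h : AggLt (T.faggOn (T.pathTo a) P) (T.faggOn (T.pathTo b) P)) :
    AggLt (T.fagg (insert a P)) (T.fagg (insert b P)) :=
  path_lt_imp_placement_lt_general T P a b haP hbP h
end
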